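/- arXiv:2602.03807 — 2 statements merged into one kernel-verified Lean document; each statement's English description precedes it below -/
import Mathlib

section
/- Let M be a non-orientable regular map of type {p,q} where at least one of p, q is odd. Then M contains a closed walk of odd length that traces an odd number of 1-edges. -/
/-- A maniplex of rank `n` in permutation form: a flag set `F` together with
fixed-point-free involutions `r i` (the `i`-adjacency maps, giving a proper
`n`-edge-colouring of an `n`-valent graph), satisfying the string property
(for non-consecutive colours `i, j` the maps commute and the `{i,j}`-subgraph
has no multiple edges, so that it is a disjoint union of 4-cycles), and
connectivity. -/
structure Maniplex (n : ℕ) (F : Type*) where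
  r : Fin n → F → F
  invol : ∀ i u, r i (r i u) = u
  free : ∀ i u, r i u ≠ u
  stringComm : ∀ i j : Fin n, (i : ℕ) + 1 < (j : ℕ) → ∀ u, r i (r j u) = r j (r i u)
  stringNe : ∀ i j : Fin n, (i : ℕ) + 1 < (j : ℕ) → ∀ u, r i u ≠ r j u
  conn : ∀ u v : F, ∃ l : List (Fin n), l.foldl (fun w i => r i w) u = v

/-- The flag reached from `u` by following the walk whose successive edge
colours are listed in `l`. -/
def walkEnd {n : ℕ} {F : Type*} (M : Maniplex n F) (l : List (Fin n)) (u : F) : F :=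
  l.foldl (fun w i => M.r i w) u

/-- The alternating weight `Σ (-1)^t ω(e_t)` of the walk starting at `u` whose
successive edge colours are listed in `l`. -/
def walkWeight {n k : ℕ} {F : Type*} (M : Maniplex n F) (ω : Fin n → F → ZMod k) :
    List (Fin n) → F → ZMod k
  | [], _ => 0
  | i :: t, u => ω i u - walkWeight M ω t (M.r i u)

/-- The `i`-adjacency map of the cross-cover `M^ω`: flags `F × ℤ_k`, with
`(u, a)` being `i`-adjacent to `(r i u, ω_i(u) - a)`. -/
def coverMap {n k : ℕ} {F : Type*} (M : Maniplex n F) (ω : Fin n → F → ZMod k)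
    (i : Fin n) : F × ZMod k → F × ZMod k :=
  fun p => (M.r i p.1, ω i p.1 - p.2)

/-- A map (3-maniplex) is regular if its colour-preserving automorphism group
is transitive on flags. -/
def ManiplexRegular {n : ℕ} {F : Type*} (M : Maniplex n F) : Prop :=
  ∀ u v : F, ∃ φ : Equiv.Perm F,
    (∀ (i : Fin n) (x : F), φ (M.r i x) = M.r i (φ x)) ∧ φ u = v

/-- A map (3-maniplex) is non-orientable iff its flag graph is non-bipartite,
i.e. it contains a closed walk of odd length. -/
def NonOrientable {n : ℕ} {F : Type*} (M : Maniplex n F) : Prop :=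
  ∃ (u : F) (l : List (Fin n)), Odd l.length ∧ walkEnd M l u = u

/-- A map is of type `{p,q}` if every component of the subgraph induced by the
colours `0,1` is a cycle of length `2p`, and every component of the subgraph
induced by the colours `1,2` is a cycle of length `2q`:  the rotations
`r₁ ∘ r₀` and `r₂ ∘ r₁` have all orbits of size exactly `p`, resp. `q`, and
there are no multiple edges. -/
def MapOfType {F : Type*} (M : Maniplex 3 F) (p q : ℕ) : Prop :=
  (∀ u : F,
      (fun w => M.r 1 (M.r 0 w))^[p] u = u ∧
      (∀ t, 0 < t → t < p → (fun w => M.r 1 (M.r 0 w))^[t] u ≠ u) ∧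
      M.r 0 u ≠ M.r 1 u) ∧
  (∀ u : F,
      (fun w => M.r 2 (M.r 1 w))^[q] u = u ∧
      (∀ t, 0 < t → t < q → (fun w => M.r 2 (M.r 1 w))^[t] u ≠ u) ∧
      M.r 1 u ≠ M.r 2 u)

/-!
If the given odd closed walk already traces an odd number of `1`-edges we are done. Otherwise
append the boundary of a face (if `p` is odd) or of a vertex (if `q` is odd) through its base
flag: it is a closed walk of even length `2p` (resp. `2q`) tracing exactly `p` (resp. `q`)
`1`-edges, so the concatenation is still odd and now traces an odd number of `1`-edges.
-/

section Walks

variable {n : ℕ} {F : Type*} (M : Maniplex n F)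

lemma walkEnd_append (l₁ l₂ : List (Fin n)) (u : F) :
    walkEnd M (l₁ ++ l₂) u = walkEnd M l₂ (walkEnd M l₁ u) :=
  List.foldl_append

lemma walkEnd_flatten_replicate_pair (a b : Fin n) (m : ℕ) (u : F) :
    walkEnd M (List.replicate m [a, b]).flatten u = (fun w => M.r b (M.r a w))^[m] u := by
  induction m generalizing u with
  | zero => rfl
  | succ m ih =>
    rw [List.replicate_succ, List.flatten_cons, walkEnd_append, ih, Function.iterate_succ_apply]
    rfl

end Walks

lemma exists_closed_even_walk_odd_count_one {F : Type*} {M : Maniplex 3 F} {p q : ℕ}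
    (htype : MapOfType M p q) (hodd : Odd p ∨ Odd q) (u : F) :
    ∃ l : List (Fin 3), Even l.length ∧ walkEnd M l u = u ∧ Odd (l.count 1) := by
  obtain ⟨m, a, b, hm, hcycle, hab⟩ : ∃ (m : ℕ) (a b : Fin 3),
      Odd m ∧ (fun w => M.r b (M.r a w))^[m] u = u ∧ [a, b].count 1 = 1 := by
    rcases hodd with hp | hq
    · exact ⟨p, 0, 1, hp, (htype.1 u).1, rfl⟩
    · exact ⟨q, 1, 2, hq, (htype.2 u).1, rfl⟩
  refine ⟨(List.replicate m [a, b]).flatten, ?_, ?_, ?_⟩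
  · simp [List.length_flatten, List.sum_replicate]
  · rw [walkEnd_flatten_replicate_pair, hcycle]
  · simpa [List.count_flatten, List.sum_replicate, hab] using hm

theorem exists_oddWalk_odd_one_edges_general {F : Type*} (M : Maniplex 3 F) (p q : ℕ)
    (htype : MapOfType M p q) (hnonor : NonOrientable M)
    (hodd : Odd p ∨ Odd q) :
    ∃ (u : F) (l : List (Fin 3)), Odd l.length ∧ walkEnd M l u = u ∧
      Odd (l.count (1 : Fin 3)) := by
  obtain ⟨u, l, hlen, hend⟩ := hnonor
  rcases Nat.even_or_odd (l.count 1) with hcount | hcount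
  · obtain ⟨l', hlen', hend', hcount'⟩ := exists_closed_even_walk_odd_count_one htype hodd u
    refine ⟨u, l ++ l', ?_, ?_, ?_⟩
    · simpa only [List.length_append] using hlen.add_even hlen'
    · rw [walkEnd_append, hend, hend']
    · simpa only [List.count_append] using hcount.add_odd hcount'
  · exact ⟨u, l, hlen, hend, hcount⟩

/-- Every non-orientable regular map of type `{p,q}` with at least one of `p`,
`q` odd contains a closed walk of odd length tracing an odd number of
`1`-edges. -/
theorem exists_oddWalk_odd_one_edges {F : Type*} (M : Maniplex 3 F) (p q : ℕ)
    (htype : MapOfType M p q) (hreg : ManiplexRegular M) (hnonor : NonOrientable M)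
    (hodd : Odd p ∨ Odd q) :
    ∃ (u : F) (l : List (Fin 3)), Odd l.length ∧ walkEnd M l u = u ∧
      Odd (l.count (1 : Fin 3)) :=
  exists_oddWalk_odd_one_edges_general M p q htype hnonor hodd
end

section
/- Let M be a regular n-maniplex with weight function ω: E(M) → ℤ_4 such that: ω is Aut(M)-consistent (every automorphism lifts to M^ω), M^ω is a non-orientable maniplex, and M contains a closed walk of odd length with even weight. Then the automorphism group of M^ω has exactly 2 orbits on vertices. -/
/-- Explicit formula for following a walk in the cross-cover. -/
lemma fold_cover {n : ℕ} {F : Type*} (M : Maniplex n F) (ω : Fin n → F → ZMod 4)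
    (l : List (Fin n)) : ∀ (u : F) (a : ZMod 4),
    l.foldl (fun x i => coverMap M ω i x) (u, a) =
      (walkEnd M l u, (-1 : ZMod 4) ^ l.length * (a - walkWeight M ω l u)) := by
  induction l with
  | nil => intro u a; simp [walkEnd, walkWeight]
  | cons i t ih =>
    intro u a
    have h1 : (i :: t).foldl (fun x i => coverMap M ω i x) (u, a)
        = t.foldl (fun x i => coverMap M ω i x) (M.r i u, ω i u - a) := rfl
    rw [h1, ih]
    refine Prod.ext rfl ?_
    show (-1 : ZMod 4) ^ t.length * ((ω i u - a) - walkWeight M ω t (M.r i u))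
        = (-1 : ZMod 4) ^ (t.length + 1) * (a - (ω i u - walkWeight M ω t (M.r i u)))
    rw [pow_succ]; ring

/-- Automorphisms commute with following walks. -/
lemma fold_comm {n : ℕ} {F : Type*} (M : Maniplex n F) (ω : Fin n → F → ZMod 4)
    (g : Equiv.Perm (F × ZMod 4))
    (hg : ∀ (i : Fin n) (x : F × ZMod 4),
      g (coverMap M ω i x) = coverMap M ω i (g x))
    (l : List (Fin n)) : ∀ x : F × ZMod 4,
    g (l.foldl (fun x i => coverMap M ω i x) x)
      = l.foldl (fun x i => coverMap M ω i x) (g x) := by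
  induction l with
  | nil => intro x; rfl
  | cons i t ih =>
    intro x
    have h1 : (i :: t).foldl (fun x i => coverMap M ω i x) x
        = t.foldl (fun x i => coverMap M ω i x) (coverMap M ω i x) := rfl
    rw [h1, ih, hg]
    rfl

/-- The shift-by-2 automorphism of the cross-cover. -/
def shiftTwo (F : Type*) : Equiv.Perm (F × ZMod 4) where
  toFun p := (p.1, p.2 + 2)
  invFun p := (p.1, p.2 + 2)
  left_inv p := by
    refine Prod.ext rfl ?_
    show p.2 + 2 + 2 = p.2
    have : (2 + 2 : ZMod 4) = 0 := by decide
    rw [add_assoc, this, add_zero]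
  right_inv p := by
    refine Prod.ext rfl ?_
    show p.2 + 2 + 2 = p.2
    have : (2 + 2 : ZMod 4) = 0 := by decide
    rw [add_assoc, this, add_zero]

lemma shiftTwo_comm {n : ℕ} {F : Type*} (M : Maniplex n F) (ω : Fin n → F → ZMod 4)
    (i : Fin n) (x : F × ZMod 4) :
    shiftTwo F (coverMap M ω i x) = coverMap M ω i (shiftTwo F x) := by
  refine Prod.ext rfl ?_
  show ω i x.1 - x.2 + 2 = ω i x.1 - (x.2 + 2)
  have h4 : (4 : ZMod 4) = 0 := by decide
  linear_combination h4

/-- Let `M` be a regular `n`-maniplex with a weight function `ω` into `ℤ_4`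
such that `ω` is `Aut(M)`-consistent (every automorphism of `M` lifts to the
cross-cover), `M^ω` is a non-orientable maniplex (connected, string property,
non-bipartite), and `M` contains a closed walk of odd length with even weight.
Then the colour-preserving automorphism group of `M^ω` has exactly two orbits
on flags. -/
theorem crossCover_two_orbits {n : ℕ} {F : Type*} (M : Maniplex n F)
    (ω : Fin n → F → ZMod 4)
    (hω : ∀ i u, ω i (M.r i u) = ω i u)
    (hreg : ∀ u v : F, ∃ φ : Equiv.Perm F,
      (∀ (i : Fin n) (x : F), φ (M.r i x) = M.r i (φ x)) ∧ φ u = v)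
    (hconsistent : ∀ φ : Equiv.Perm F,
      (∀ (i : Fin n) (x : F), φ (M.r i x) = M.r i (φ x)) →
      ∃ g : Equiv.Perm (F × ZMod 4),
        (∀ (i : Fin n) (x : F × ZMod 4),
          g (coverMap M ω i x) = coverMap M ω i (g x)) ∧
        ∀ x : F × ZMod 4, (g x).1 = φ x.1)
    (hconn : ∀ P Q : F × ZMod 4,
      ∃ l : List (Fin n), l.foldl (fun x i => coverMap M ω i x) P = Q)
    (hstring : ∀ i j : Fin n, (i : ℕ) + 1 < (j : ℕ) → ∀ P : F × ZMod 4,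
        coverMap M ω i (coverMap M ω j P) = coverMap M ω j (coverMap M ω i P) ∧
        coverMap M ω i P ≠ coverMap M ω j P)
    (hnonor : ∃ (P : F × ZMod 4) (l : List (Fin n)), Odd l.length ∧
        l.foldl (fun x i => coverMap M ω i x) P = P)
    (hwalk : ∃ (u : F) (l : List (Fin n)), Odd l.length ∧ walkEnd M l u = u ∧
      ∃ t : ZMod 4, walkWeight M ω l u = t + t) :
    ∃ P Q : F × ZMod 4,
      (¬ ∃ g : Equiv.Perm (F × ZMod 4),
        (∀ (i : Fin n) (x : F × ZMod 4),
          g (coverMap M ω i x) = coverMap M ω i (g x)) ∧ g P = Q) ∧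
      ∀ R : F × ZMod 4,
        (∃ g : Equiv.Perm (F × ZMod 4),
          (∀ (i : Fin n) (x : F × ZMod 4),
            g (coverMap M ω i x) = coverMap M ω i (g x)) ∧ g R = P) ∨
        (∃ g : Equiv.Perm (F × ZMod 4),
          (∀ (i : Fin n) (x : F × ZMod 4),
            g (coverMap M ω i x) = coverMap M ω i (g x)) ∧ g R = Q) := by
  obtain ⟨u, l, hodd, hend, t, hW⟩ := hwalk
  have hneg : (-1 : ZMod 4) ^ l.length = -1 := hodd.neg_one_pow
  refine ⟨(u, t), (u, t + 1), ?_, ?_⟩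
  · rintro ⟨g, hg, hgP⟩
    have h1 : l.foldl (fun x i => coverMap M ω i x) (u, t) = (u, t) := by
      rw [fold_cover, hend, hW, hneg]
      refine Prod.ext rfl ?_
      show (-1 : ZMod 4) * (t - (t + t)) = t
      ring
    have h2 := fold_comm M ω g hg l (u, t)
    rw [h1, hgP, fold_cover, hend, hW, hneg] at h2
    have h3 : (t + 1 : ZMod 4) = -1 * (t + 1 - (t + t)) := congrArg Prod.snd h2
    have h4 : (t + 1 : ZMod 4) = t - 1 := by rw [h3]; ring
    have h5 : (2 : ZMod 4) = 0 := by linear_combination h4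
    exact absurd h5 (by decide)
  · intro R
    obtain ⟨φ, hφ, hφv⟩ := hreg R.1 u
    obtain ⟨g, hg, hgfst⟩ := hconsistent φ hφ
    have hgR : g R = (u, (g R).2) := by
      refine Prod.ext ?_ rfl
      rw [hgfst R, hφv]
    set d := (g R).2 with hd
    have hcomm2 : ∀ (i : Fin n) (x : F × ZMod 4),
        (g.trans (shiftTwo F)) (coverMap M ω i x)
          = coverMap M ω i ((g.trans (shiftTwo F)) x) := by
      intro i x
      show shiftTwo F (g (coverMap M ω i x)) = coverMap M ω i (shiftTwo F (g x))
      rw [hg, shiftTwo_comm]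
    have hall : ∀ e : ZMod 4, e = 0 ∨ e = 1 ∨ e = 2 ∨ e = 3 := by decide
    have hcases := hall (d - t)
    have htrans2 : (g.trans (shiftTwo F)) R = (u, d + 2) := by
      show shiftTwo F (g R) = (u, d + 2)
      rw [hgR]; rfl
    rcases hcases with h | h | h | h
    · left; exact ⟨g, hg, by rw [hgR, sub_eq_zero.mp h]⟩
    · right; refine ⟨g, hg, ?_⟩
      rw [hgR]
      have : d = t + 1 := by linear_combination h
      rw [this]
    · left; refine ⟨g.trans (shiftTwo F), hcomm2, ?_⟩
      rw [htrans2]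
      have : d + 2 = t := by
        have h4 : d = t + 2 := by linear_combination h
        rw [h4]
        have : (2 + 2 : ZMod 4) = 0 := by decide
        rw [add_assoc, this, add_zero]
      rw [this]
    · right; refine ⟨g.trans (shiftTwo F), hcomm2, ?_⟩
      rw [htrans2]
      have : d + 2 = t + 1 := by
        have h4 : d = t + 3 := by linear_combination h
        rw [h4]
        have : (3 + 2 : ZMod 4) = 1 := by decide
        rw [add_assoc, this]
      rw [this]
end
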